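/- Let K be a real number with 0 < K < 1. Let (λ,μ) ∈ Θ, let (α,β) ∈ Ω_{λ,μ}, and let α', β' be real numbers such that (i) |αβ - K/(λ+μ-1)|/(1-μ) < |β'| < 1-λ and (ii) α' = (αβ - K/(λ+μ-1))/β'. Define a = (λ+β)/2, b = (1-λ-β')/2, c = (1-λ+β')/2, d = (λ-β)/2, e = (1-μ-α')/2, f = (μ+α)/2, g = (μ-α)/2, h = (1-μ+α')/2, and let A be the 4×4 matrix with rows (a,b,c,d), (e,f,g,h), (h,g,f,e), (d,c,b,a). Then A is a strictly stochastic strand symmetric matrix with det(A) = K, with a + d + f + g > 1, b ≠ c, and f > g. -/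

import Mathlib

/-- The polynomial `r_K(z) = z³ + z - 2K`. -/
def rK (K z : ℝ) : ℝ := z ^ 3 + z - 2 * K

/-- The set `Θ` of pairs `(λ,μ) ∈ (0,1)²` with `ν₀ + 1 ≤ λ + μ < 2` and
`|λ - μ| < min { 2 - λ - μ, √(r_K(λ+μ-1)/(λ+μ-1)) }`. -/
noncomputable def Theta (K ν : ℝ) : Set (ℝ × ℝ) :=
  {p | p.1 ∈ Set.Ioo (0 : ℝ) 1 ∧ p.2 ∈ Set.Ioo (0 : ℝ) 1 ∧
    ν + 1 ≤ p.1 + p.2 ∧ p.1 + p.2 < 2 ∧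
    |p.1 - p.2| <
      min (2 - p.1 - p.2) (Real.sqrt (rK K (p.1 + p.2 - 1) / (p.1 + p.2 - 1)))}

/-- The set `Ω_{λ,μ}`. -/
noncomputable def OmegaLM (K lam mu : ℝ) : Set (ℝ × ℝ) :=
  {p | 0 < p.1 ∧ p.1 < mu ∧ |p.2| < lam ∧
    |p.1 * p.2 - K / (lam + mu - 1)| < (1 - lam) * (1 - mu)}

/-!
A strand symmetric matrix is block diagonal in the basis `e₀ ± e₃, e₁ ± e₂`, so its determinant is
the product of the determinants of the two `2 × 2` blocks acting on the symmetric and on the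
antisymmetric vectors. For a stochastic one with `λ = a + d` and `μ = f + g` the first block has
determinant `λ + μ - 1`, and in the parametrization of the theorem the second one has determinant
`αβ - α'β' = K / (λ + μ - 1)`. Positivity of the entries amounts to `|β| < λ`, `|α| < μ`,
`|β'| < 1 - λ` and `|α'| < 1 - μ`, the last of which is what condition (i) is designed for.
-/

def strandSymm (a b c d e f g h : ℝ) : Matrix (Fin 4) (Fin 4) ℝ :=
  !![a, b, c, d; e, f, g, h; h, g, f, e; d, c, b, a]

section StrandSymm

variable {a b c d e f g h : ℝ}

theorem strandSymm_pos (ha : 0 < a) (hb : 0 < b) (hc : 0 < c) (hd : 0 < d)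
    (he : 0 < e) (hf : 0 < f) (hg : 0 < g) (hh : 0 < h) :
    ∀ i j, 0 < strandSymm a b c d e f g h i j := by
  intro i j
  fin_cases i <;> fin_cases j <;> simpa [strandSymm]

theorem strandSymm_row_sum (h₁ : a + b + c + d = 1) (h₂ : e + f + g + h = 1) :
    ∀ i, ∑ j, strandSymm a b c d e f g h i j = 1 := by
  intro i
  fin_cases i <;> simp [strandSymm, Fin.sum_univ_four] <;> linarith

theorem det_strandSymm :
    (strandSymm a b c d e f g h).det =
      ((a + d) * (f + g) - (b + c) * (e + h)) * ((a - d) * (f - g) - (c - b) * (h - e)) := by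
  simp [strandSymm, Matrix.det_succ_row_zero, Fin.sum_univ_succ, Fin.succAbove]
  ring

end StrandSymm

theorem abs_div_lt_of_abs_div_lt {x y m : ℝ} (hm : 0 < m) (h : |x| / m < |y|) :
    |x / y| < m := by
  have hy : 0 < |y| := (div_nonneg (abs_nonneg x) hm.le).trans_lt h
  rw [abs_div, div_lt_iff₀ hy]
  rwa [div_lt_iff₀ hm, mul_comm] at h

theorem stmt_17_general (K : ℝ) (ν : ℝ)
    (hν : 0 < ν ∧ rK K ν = 0)
    (lam mu : ℝ) (hTheta : (lam, mu) ∈ Theta K ν)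
    (al be : ℝ) (hOmega : (al, be) ∈ OmegaLM K lam mu)
    (al' be' : ℝ)
    (hbe' : |al * be - K / (lam + mu - 1)| / (1 - mu) < |be'| ∧ |be'| < 1 - lam)
    (hal' : al' = (al * be - K / (lam + mu - 1)) / be')
    (a b c d e f g h : ℝ)
    (ha : a = (lam + be) / 2) (hb : b = (1 - lam - be') / 2)
    (hc : c = (1 - lam + be') / 2) (hd : d = (lam - be) / 2)
    (he : e = (1 - mu - al') / 2) (hf : f = (mu + al) / 2)
    (hg : g = (mu - al) / 2) (hh : h = (1 - mu + al') / 2)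
    (A : Matrix (Fin 4) (Fin 4) ℝ)
    (hA : A = !![a, b, c, d; e, f, g, h; h, g, f, e; d, c, b, a]) :
    (∀ i j, 0 < A i j) ∧ (∀ i, ∑ j, A i j = 1) ∧ A.det = K ∧
      1 < a + d + f + g ∧ b ≠ c ∧ g < f := by
  obtain rfl : A = strandSymm a b c d e f g h := hA
  simp only [Theta, OmegaLM, Set.mem_Ioo] at hTheta hOmega
  obtain ⟨-, ⟨-, hmu1⟩, hsum, -⟩ := hTheta
  obtain ⟨hal0, halmu, hbe, -⟩ := hOmega
  have hlm : 0 < lam + mu - 1 := by linarith [hν.1]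
  have hbe'0 : be' ≠ 0 :=
    abs_pos.mp <| (div_nonneg (abs_nonneg _) (by linarith)).trans_lt hbe'.1
  have hal'_lt : |al'| < 1 - mu := hal' ▸ abs_div_lt_of_abs_div_lt (by linarith) hbe'.1
  obtain ⟨hbe_lo, hbe_hi⟩ := abs_lt.mp hbe
  obtain ⟨hbe'_lo, hbe'_hi⟩ := abs_lt.mp hbe'.2
  obtain ⟨hal'_lo, hal'_hi⟩ := abs_lt.mp hal'_lt
  have hdet : (lam + mu - 1) * (al * be - al' * be') = K := by
    rw [hal', div_mul_cancel₀ _ hbe'0]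
    field_simp
    ring
  subst ha hb hc hd he hf hg hh
  refine ⟨strandSymm_pos (by linarith) (by linarith) (by linarith) (by linarith)
    (by linarith) (by linarith) (by linarith) (by linarith),
    strandSymm_row_sum (by ring) (by ring), ?_, by linarith, ?_, by linarith⟩
  · rw [det_strandSymm, ← hdet]; ring
  · intro hbc; exact hbe'0 (by linarith)

theorem stmt_17 (K : ℝ) (hK0 : 0 < K) (hK1 : K < 1) (ν : ℝ)
    (hν : 0 < ν ∧ rK K ν = 0)
    (hνu : ∀ t : ℝ, 0 < t → rK K t = 0 → t = ν)
    (lam mu : ℝ) (hTheta : (lam, mu) ∈ Theta K ν)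
    (al be : ℝ) (hOmega : (al, be) ∈ OmegaLM K lam mu)
    (al' be' : ℝ)
    (hbe' : |al * be - K / (lam + mu - 1)| / (1 - mu) < |be'| ∧ |be'| < 1 - lam)
    (hal' : al' = (al * be - K / (lam + mu - 1)) / be')
    (a b c d e f g h : ℝ)
    (ha : a = (lam + be) / 2) (hb : b = (1 - lam - be') / 2)
    (hc : c = (1 - lam + be') / 2) (hd : d = (lam - be) / 2)
    (he : e = (1 - mu - al') / 2) (hf : f = (mu + al) / 2)
    (hg : g = (mu - al) / 2) (hh : h = (1 - mu + al') / 2)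
    (A : Matrix (Fin 4) (Fin 4) ℝ)
    (hA : A = !![a, b, c, d; e, f, g, h; h, g, f, e; d, c, b, a]) :
    (∀ i j, 0 < A i j) ∧ (∀ i, ∑ j, A i j = 1) ∧ A.det = K ∧
      1 < a + d + f + g ∧ b ≠ c ∧ g < f :=
  stmt_17_general K ν hν lam mu hTheta al be hOmega al' be' hbe' hal' a b c d e f g h ha hb hc hd he
    hf hg hh A hA
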